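/- arXiv:1602.03938 — 3 statements merged into one kernel-verified Lean document; each statement's English description precedes it below -/
import Mathlib

section
/- For q ≥ 4 and a finite set Z = {z_1,…,z_m} ⊆ ℝ^p, the function D_q(z; Z) is β̄-smooth on conv(Z) with β̄ = (q-1)(q-2)·max_{j=1,…,m} D_{q-2}(z_j; Z), i.e., ‖∇D_q(z; Z) − ∇D_q(z'; Z)‖₂ ≤ β̄‖z − z'‖₂ for all z, z' ∈ conv(Z). -/
/-!
The gradient `G(z) = (1/m) Σ ‖z - z_i‖^{q-2} (z - z_i)` of `D_q` is differentiable, and the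
derivative of `u ↦ ‖u‖^r u` is `‖u‖^r I + r ‖u‖^{r-2} u uᵀ`, of operator norm at most
`(r + 1) ‖u‖^r`. Hence `‖DG(z)‖ ≤ (q-1)/m Σ ‖z - z_i‖^{q-2} = (q-1)(q-2) D_{q-2}(z)`. Since
`D_{q-2}` is convex for `q ≥ 3`, its maximum over `conv(Z)` is attained at one of the `z_j`, and
the mean value inequality on the convex set `conv(Z)` gives the Lipschitz bound.
-/

open Finset

section Convexity

variable {V : Type*} [AddCommGroup V] [Module ℝ V]

theorem ConvexOn.rpow {s : Set V} {f : V → ℝ} (hf : ConvexOn ℝ s f)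
    (hf₀ : ∀ ⦃x⦄, x ∈ s → 0 ≤ f x) {p : ℝ} (hp : 1 ≤ p) : ConvexOn ℝ s fun x => f x ^ p :=
  ⟨hf.1, fun x hx y hy a b ha hb hab => calc
    f (a • x + b • y) ^ p ≤ (a * f x + b * f y) ^ p :=
      Real.rpow_le_rpow (hf₀ (hf.1 hx hy ha hb hab)) (hf.2 hx hy ha hb hab) (by linarith)
    _ ≤ a * f x ^ p + b * f y ^ p := (convexOn_rpow hp).2 (hf₀ hx) (hf₀ hy) ha hb hab⟩

theorem ConvexOn.fun_sum {ι : Type*} {s : Set V} {f : ι → V → ℝ} (t : Finset ι)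
    (hf : ∀ i ∈ t, ConvexOn ℝ s (f i)) (hs : Convex ℝ s) :
    ConvexOn ℝ s fun x => ∑ i ∈ t, f i x :=
  ⟨hs, fun x hx y hy a b ha hb hab => by
    simp only [smul_eq_mul, mul_sum, ← sum_add_distrib]
    exact sum_le_sum fun i hi => (hf i hi).2 hx hy ha hb hab⟩

end Convexity

theorem Real.rpow_sub_two_mul_sq {x r : ℝ} (hx : 0 ≤ x) (hr : r ≠ 0) :
    x ^ (r - 2) * x ^ 2 = x ^ r := by
  rw [← Real.rpow_two, ← Real.rpow_add' hx (by simpa using hr), sub_add_cancel]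

section NormRpow

variable {E : Type*} [NormedAddCommGroup E] [InnerProductSpace ℝ E]

theorem convexOn_norm_sub_rpow (a : E) {p : ℝ} (hp : 1 ≤ p) :
    ConvexOn ℝ Set.univ fun x : E => ‖x - a‖ ^ p := by
  simpa only [dist_eq_norm] using
    (convexOn_univ_dist a).rpow (fun _ _ => dist_nonneg) hp

theorem hasFDerivAt_norm_rpow_smul_self (u : E) {r : ℝ} (hr : 1 < r) :
    HasFDerivAt (fun u : E => ‖u‖ ^ r • u)
      (‖u‖ ^ r • ContinuousLinearMap.id ℝ E
        + ((r * ‖u‖ ^ (r - 2)) • innerSL ℝ u).smulRight u) u :=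
  (hasFDerivAt_norm_rpow u hr).smul (hasFDerivAt_id u)

theorem norm_fderiv_norm_rpow_smul_self_le (u : E) {r : ℝ} (hr : 1 < r) :
    ‖fderiv ℝ (fun u : E => ‖u‖ ^ r • u) u‖ ≤ (r + 1) * ‖u‖ ^ r := by
  have hu : 0 ≤ ‖u‖ ^ r := by positivity
  rw [(hasFDerivAt_norm_rpow_smul_self u hr).fderiv]
  calc _ ≤ ‖‖u‖ ^ r • ContinuousLinearMap.id ℝ E‖
          + ‖((r * ‖u‖ ^ (r - 2)) • innerSL ℝ u).smulRight u‖ := norm_add_le _ _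
    _ ≤ ‖u‖ ^ r * 1 + r * ‖u‖ ^ (r - 2) * ‖u‖ * ‖u‖ := by
      rw [norm_smul, ContinuousLinearMap.norm_smulRight_apply, norm_smul, innerSL_apply_norm,
        Real.norm_of_nonneg hu, Real.norm_of_nonneg (by positivity)]
      gcongr
      exact ContinuousLinearMap.norm_id_le
    _ = (r + 1) * ‖u‖ ^ r := by
      rw [← Real.rpow_sub_two_mul_sq (norm_nonneg u) (by linarith)]
      ring

end NormRpow

section PowDeviation

variable {E : Type*} [NormedAddCommGroup E] [InnerProductSpace ℝ E] {m : ℕ}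

/-- The paper's `D_q(z; Z)`. -/
noncomputable def powDeviation (q : ℝ) (Z : Fin m → E) (z : E) : ℝ :=
  (1 / (m * q)) * ∑ i, ‖z - Z i‖ ^ q

/-- The paper's `∇D_q(z; Z)`. -/
noncomputable def gradPowDeviation (q : ℝ) (Z : Fin m → E) (z : E) : E :=
  (m : ℝ)⁻¹ • ∑ i, ‖z - Z i‖ ^ (q - 2) • (z - Z i)

theorem hasGradientAt_powDeviation [CompleteSpace E] {q : ℝ} (hq : 1 < q) (Z : Fin m → E)
    (z : E) : HasGradientAt (powDeviation q Z) (gradPowDeviation q Z z) z := by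
  have hD : HasFDerivAt (powDeviation q Z)
      ((1 / (m * q)) • ∑ i, (q * ‖z - Z i‖ ^ (q - 2)) • innerSL ℝ (z - Z i)) z :=
    (HasFDerivAt.fun_sum fun i _ =>
      (hasFDerivAt_comp_sub (Z i)).2 (hasFDerivAt_norm_rpow (z - Z i) hq)).const_mul _
  rw [hasGradientAt_iff_hasFDerivAt]
  refine hD.congr_fderiv ?_
  ext v
  simp only [gradPowDeviation, map_smul, map_sum, InnerProductSpace.toDual_apply_apply,
    _root_.smul_apply, _root_.sum_apply, innerSL_apply_apply, smul_eq_mul, mul_sum]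
  refine sum_congr rfl fun i _ => ?_
  field_simp

theorem hasFDerivAt_gradPowDeviation {q : ℝ} (hq : 3 < q) (Z : Fin m → E) (z : E) :
    HasFDerivAt (gradPowDeviation q Z)
      ((m : ℝ)⁻¹ • ∑ i, fderiv ℝ (fun u : E => ‖u‖ ^ (q - 2) • u) (z - Z i)) z :=
  (HasFDerivAt.fun_sum fun i _ => (hasFDerivAt_comp_sub (Z i)).2
    (hasFDerivAt_norm_rpow_smul_self (z - Z i) (by linarith)).differentiableAt.hasFDerivAt)
    |>.const_smul _

theorem norm_fderiv_gradPowDeviation_le {q : ℝ} (hq : 3 < q) (Z : Fin m → E) (z : E) :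
    ‖fderiv ℝ (gradPowDeviation q Z) z‖ ≤ (q - 1) * (q - 2) * powDeviation (q - 2) Z z := by
  rw [(hasFDerivAt_gradPowDeviation hq Z z).fderiv, powDeviation]
  calc _ ≤ (m : ℝ)⁻¹ * ∑ i, (q - 2 + 1) * ‖z - Z i‖ ^ (q - 2) := by
        rw [norm_smul, Real.norm_of_nonneg (by positivity)]
        gcongr
        exact (norm_sum_le _ _).trans <| sum_le_sum fun i _ =>
          norm_fderiv_norm_rpow_smul_self_le _ (by linarith)
    _ = _ := by
        have : q - 2 ≠ 0 := by linarith
        rw [← mul_sum]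
        field_simp
        ring

theorem powDeviation_le_iSup_of_mem_convexHull {r : ℝ} (hr : 1 ≤ r) (Z : Fin m → E) {z : E}
    (hz : z ∈ convexHull ℝ (Set.range Z)) :
    powDeviation r Z z ≤ ⨆ j, powDeviation r Z (Z j) := by
  have hconv : ConvexOn ℝ Set.univ fun w => ∑ i, ‖w - Z i‖ ^ r :=
    .fun_sum _ (fun i _ => convexOn_norm_sub_rpow (Z i) hr) convex_univ
  obtain ⟨_, ⟨j, rfl⟩, hj⟩ := hconv.exists_ge_of_mem_convexHull (Set.subset_univ _) hz
  refine le_ciSup_of_le (Set.finite_range _).bddAbove j ?_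
  unfold powDeviation
  gcongr

theorem norm_gradPowDeviation_sub_le {q : ℝ} (hq : 3 < q) (Z : Fin m → E) {z z' : E}
    (hz : z ∈ convexHull ℝ (Set.range Z)) (hz' : z' ∈ convexHull ℝ (Set.range Z)) :
    ‖gradPowDeviation q Z z - gradPowDeviation q Z z'‖
      ≤ (q - 1) * (q - 2) * (⨆ j, powDeviation (q - 2) Z (Z j)) * ‖z - z'‖ := by
  have hHess : ∀ w ∈ convexHull ℝ (Set.range Z), ‖fderiv ℝ (gradPowDeviation q Z) w‖
      ≤ (q - 1) * (q - 2) * ⨆ j, powDeviation (q - 2) Z (Z j) := fun w hw => by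
    have hq' : 0 ≤ (q - 1) * (q - 2) := by nlinarith
    calc _ ≤ (q - 1) * (q - 2) * powDeviation (q - 2) Z w :=
          norm_fderiv_gradPowDeviation_le hq Z w
      _ ≤ _ := by
          gcongr
          exact powDeviation_le_iSup_of_mem_convexHull (by linarith) Z hw
  exact (convex_convexHull ℝ _).norm_image_sub_le_of_norm_fderiv_le
    (fun w _ => (hasFDerivAt_gradPowDeviation hq Z w).differentiableAt) hHess hz' hz

end PowDeviation

theorem Dq_smooth_on_convexHull_general {p m : ℕ} (q : ℝ) (hq : 4 ≤ q)
    (Z : Fin m → EuclideanSpace ℝ (Fin p)) :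
    ∀ z ∈ convexHull ℝ (Set.range Z), ∀ z' ∈ convexHull ℝ (Set.range Z),
      ‖gradient (fun w : EuclideanSpace ℝ (Fin p) =>
            (1 / (m * q)) * ∑ i, ‖w - Z i‖ ^ q) z
        - gradient (fun w : EuclideanSpace ℝ (Fin p) =>
            (1 / (m * q)) * ∑ i, ‖w - Z i‖ ^ q) z'‖
      ≤ ((q - 1) * (q - 2) *
          ⨆ j : Fin m, (1 / (m * (q - 2))) * ∑ i, ‖Z j - Z i‖ ^ (q - 2)) *
        ‖z - z'‖ := by
  intro z hz z' hz'
  have hgrad : gradient (powDeviation q Z) = gradPowDeviation q Z :=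
    funext fun w => (hasGradientAt_powDeviation (by linarith) Z w).gradient
  change ‖gradient (powDeviation q Z) z - gradient (powDeviation q Z) z'‖
    ≤ (q - 1) * (q - 2) * (⨆ j, powDeviation (q - 2) Z (Z j)) * ‖z - z'‖
  rw [hgrad]
  exact norm_gradPowDeviation_sub_le (by linarith) Z hz hz'

/-- For q ≥ 4, D_q(·; Z) is β̄-smooth on conv(Z) with
β̄ = (q-1)(q-2)·max_j D_{q-2}(z_j; Z): the gradient is β̄-Lipschitz on conv(Z). -/
theorem Dq_smooth_on_convexHull {p m : ℕ} (q : ℝ) (hq : 4 ≤ q)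
    (Z : Fin m → EuclideanSpace ℝ (Fin p)) (hm : 0 < m) :
    ∀ z ∈ convexHull ℝ (Set.range Z), ∀ z' ∈ convexHull ℝ (Set.range Z),
      ‖gradient (fun w : EuclideanSpace ℝ (Fin p) =>
            (1 / (m * q)) * ∑ i, ‖w - Z i‖ ^ q) z
        - gradient (fun w : EuclideanSpace ℝ (Fin p) =>
            (1 / (m * q)) * ∑ i, ‖w - Z i‖ ^ q) z'‖
      ≤ ((q - 1) * (q - 2) *
          ⨆ j : Fin m, (1 / (m * (q - 2))) * ∑ i, ‖Z j - Z i‖ ^ (q - 2)) *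
        ‖z - z'‖ :=
  Dq_smooth_on_convexHull_general q hq Z
end

section
/- For q ≥ 4 and a finite set Z = {z_1,…,z_m} ⊆ ℝ^p with not all points equal, the function D_q(z; Z) is μ̄-strongly convex on conv(Z) with μ̄ = (q-2)·D_{q-2}(C_{q-2}(Z); Z) > 0, i.e., (∇D_q(z) − ∇D_q(z'))^T(z − z') ≥ μ̄‖z − z'‖₂² for all z, z' ∈ conv(Z). -/
open scoped BigOperators RealInnerProductSpace

/-! The gradient of `D_q(·; Z)` is `w ↦ (1/m) Σ ‖w - z_i‖^(q-2) (w - z_i)`. For each `i` the map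
`a ↦ ‖a‖^r a` (`r ≥ 0`) is monotone with modulus `(‖a‖^r + ‖b‖^r)/2`, because
`(‖a‖^r - ‖b‖^r)(‖a‖² - ‖b‖²) ≥ 0`. Summing over `i`, the modulus becomes the average of
`m (q-2) D_{q-2}` at `z` and `z'`, which is at least its value at the minimizer `C_{q-2}(Z)`. -/

section NormRpow

variable {E : Type*} [NormedAddCommGroup E]

theorem sum_norm_sub_rpow_pos {ι : Type*} [Fintype ι] {Z : ι → E} (hZ : ∃ i j, Z i ≠ Z j)
    (c : E) (r : ℝ) : 0 < ∑ i, ‖c - Z i‖ ^ r := by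
  obtain ⟨i, j, hij⟩ := hZ
  obtain ⟨k, hk⟩ : ∃ k, c ≠ Z k := by
    by_cases hci : c = Z i
    · exact ⟨j, hci ▸ hij⟩
    · exact ⟨i, hci⟩
  exact Finset.sum_pos' (fun _ _ => by positivity)
    ⟨k, Finset.mem_univ k, Real.rpow_pos_of_pos (norm_pos_iff.2 (sub_ne_zero.2 hk)) r⟩

variable [InnerProductSpace ℝ E]

theorem half_add_norm_rpow_mul_norm_sub_sq_le_inner {r : ℝ} (hr : 0 ≤ r) (a b : E) :
    (‖a‖ ^ r + ‖b‖ ^ r) / 2 * ‖a - b‖ ^ 2 ≤ ⟪‖a‖ ^ r • a - ‖b‖ ^ r • b, a - b⟫ := by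
  have hmono : 0 ≤ (‖a‖ ^ r - ‖b‖ ^ r) * (‖a‖ ^ 2 - ‖b‖ ^ 2) := by
    rcases le_total ‖a‖ ‖b‖ with h | h
    · exact mul_nonneg_of_nonpos_of_nonpos
        (sub_nonpos.2 (Real.rpow_le_rpow (norm_nonneg a) h hr))
        (sub_nonpos.2 (pow_le_pow_left₀ (norm_nonneg a) h 2))
    · exact mul_nonneg (sub_nonneg.2 (Real.rpow_le_rpow (norm_nonneg b) h hr))
        (sub_nonneg.2 (pow_le_pow_left₀ (norm_nonneg b) h 2))
  have hinner : ⟪‖a‖ ^ r • a - ‖b‖ ^ r • b, a - b⟫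
      = ‖a‖ ^ r * ‖a‖ ^ 2 + ‖b‖ ^ r * ‖b‖ ^ 2 - (‖a‖ ^ r + ‖b‖ ^ r) * ⟪a, b⟫ := by
    simp only [inner_sub_left, inner_sub_right, real_inner_smul_left, real_inner_self_eq_norm_sq,
      real_inner_comm a b]
    ring
  rw [hinner, norm_sub_sq_real]
  linarith

theorem sum_half_add_norm_rpow_mul_norm_sub_sq_le_inner {ι : Type*} [Fintype ι] {r : ℝ}
    (hr : 0 ≤ r) (Z : ι → E) (z z' : E) :
    (∑ i, ‖z - Z i‖ ^ r + ∑ i, ‖z' - Z i‖ ^ r) / 2 * ‖z - z'‖ ^ 2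
      ≤ ⟪∑ i, ‖z - Z i‖ ^ r • (z - Z i) - ∑ i, ‖z' - Z i‖ ^ r • (z' - Z i), z - z'⟫ := by
  rw [← Finset.sum_add_distrib, Finset.sum_div, Finset.sum_mul, ← Finset.sum_sub_distrib,
    sum_inner]
  refine Finset.sum_le_sum fun i _ => ?_
  simpa only [sub_sub_sub_cancel_right] using
    half_add_norm_rpow_mul_norm_sub_sq_le_inner hr (z - Z i) (z' - Z i)

variable [CompleteSpace E]

theorem hasGradientAt_norm_sub_rpow {q : ℝ} (hq : 1 < q) (z w : E) :
    HasGradientAt (fun w => ‖w - z‖ ^ q) ((q * ‖w - z‖ ^ (q - 2)) • (w - z)) w := by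
  rw [hasGradientAt_iff_hasFDerivAt, map_smul]
  exact (hasFDerivAt_norm_rpow (w - z) hq).comp w ((hasFDerivAt_id w).sub_const z)

theorem gradient_const_mul_sum_norm_sub_rpow {ι : Type*} [Fintype ι] {q : ℝ} (hq : 1 < q)
    (a : ℝ) (Z : ι → E) (w : E) :
    gradient (fun w => a * ∑ i, ‖w - Z i‖ ^ q) w
      = (a * q) • ∑ i, ‖w - Z i‖ ^ (q - 2) • (w - Z i) := by
  refine HasGradientAt.gradient ?_
  have hdual : InnerProductSpace.toDual ℝ E ((a * q) • ∑ i, ‖w - Z i‖ ^ (q - 2) • (w - Z i))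
      = a • ∑ i, InnerProductSpace.toDual ℝ E ((q * ‖w - Z i‖ ^ (q - 2)) • (w - Z i)) := by
    simp only [map_smul, map_sum, Finset.smul_sum, smul_smul, mul_assoc]
  rw [hasGradientAt_iff_hasFDerivAt, hdual]
  exact (HasFDerivAt.fun_sum fun i _ =>
    (hasGradientAt_norm_sub_rpow hq (Z i) w).hasFDerivAt).const_mul a

end NormRpow

theorem Dq_strongly_convex_on_convexHull_general {p m : ℕ} (q : ℝ) (hq : 4 ≤ q)
    (Z : Fin m → EuclideanSpace ℝ (Fin p))
    (hdist : ∃ i j, Z i ≠ Z j)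
    (c : EuclideanSpace ℝ (Fin p))
    (hc : ∀ z : EuclideanSpace ℝ (Fin p),
      (1 / (m * (q - 2))) * ∑ i, ‖c - Z i‖ ^ (q - 2)
        ≤ (1 / (m * (q - 2))) * ∑ i, ‖z - Z i‖ ^ (q - 2)) :
    0 < (q - 2) * ((1 / (m * (q - 2))) * ∑ i, ‖c - Z i‖ ^ (q - 2)) ∧
    ∀ z ∈ convexHull ℝ (Set.range Z), ∀ z' ∈ convexHull ℝ (Set.range Z),
      ((q - 2) * ((1 / (m * (q - 2))) * ∑ i, ‖c - Z i‖ ^ (q - 2))) * ‖z - z'‖ ^ 2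
        ≤ ⟪gradient (fun w : EuclideanSpace ℝ (Fin p) =>
              (1 / (m * q)) * ∑ i, ‖w - Z i‖ ^ q) z
            - gradient (fun w : EuclideanSpace ℝ (Fin p) =>
              (1 / (m * q)) * ∑ i, ‖w - Z i‖ ^ q) z',
            z - z'⟫ := by
  have hm : (0 : ℝ) < m := by
    obtain ⟨i, -⟩ := hdist
    exact_mod_cast i.pos
  have hq2 : 0 < q - 2 := by linarith
  set S := ∑ i, ‖c - Z i‖ ^ (q - 2)
  have hμ : (q - 2) * (1 / (m * (q - 2)) * S) = S / m := by field_simp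
  have hmin : ∀ z, S ≤ ∑ i, ‖z - Z i‖ ^ (q - 2) := fun z =>
    le_of_mul_le_mul_left (hc z) (by positivity)
  rw [hμ]
  refine ⟨div_pos (sum_norm_sub_rpow_pos hdist c _) hm, fun z _ z' _ => ?_⟩
  rw [gradient_const_mul_sum_norm_sub_rpow (by linarith), gradient_const_mul_sum_norm_sub_rpow
    (by linarith), ← smul_sub, real_inner_smul_left]
  have hSS' := add_le_add (hmin z) (hmin z')
  calc S / m * ‖z - z'‖ ^ 2
      ≤ 1 / m * ((∑ i, ‖z - Z i‖ ^ (q - 2) + ∑ i, ‖z' - Z i‖ ^ (q - 2)) / 2 * ‖z - z'‖ ^ 2) := by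
        rw [div_eq_inv_mul, one_div, mul_assoc]
        gcongr
        linarith
    _ ≤ 1 / m * ⟪∑ i, ‖z - Z i‖ ^ (q - 2) • (z - Z i) - ∑ i, ‖z' - Z i‖ ^ (q - 2) • (z' - Z i),
          z - z'⟫ := by
        gcongr
        exact sum_half_add_norm_rpow_mul_norm_sub_sq_le_inner hq2.le Z z z'
    _ = _ := by field_simp

/-- For q ≥ 4 and Z with not all points equal, D_q(·; Z) is
μ̄-strongly convex on conv(Z) with μ̄ = (q-2)·D_{q-2}(C_{q-2}(Z); Z) > 0,
where C_{q-2}(Z) is the minimizer of D_{q-2}(·; Z). -/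
theorem Dq_strongly_convex_on_convexHull {p m : ℕ} (q : ℝ) (hq : 4 ≤ q)
    (Z : Fin m → EuclideanSpace ℝ (Fin p)) (hm : 0 < m)
    (hdist : ∃ i j, Z i ≠ Z j)
    (c : EuclideanSpace ℝ (Fin p))
    (hc : ∀ z : EuclideanSpace ℝ (Fin p),
      (1 / (m * (q - 2))) * ∑ i, ‖c - Z i‖ ^ (q - 2)
        ≤ (1 / (m * (q - 2))) * ∑ i, ‖z - Z i‖ ^ (q - 2)) :
    0 < (q - 2) * ((1 / (m * (q - 2))) * ∑ i, ‖c - Z i‖ ^ (q - 2)) ∧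
    ∀ z ∈ convexHull ℝ (Set.range Z), ∀ z' ∈ convexHull ℝ (Set.range Z),
      ((q - 2) * ((1 / (m * (q - 2))) * ∑ i, ‖c - Z i‖ ^ (q - 2))) * ‖z - z'‖ ^ 2
        ≤ ⟪gradient (fun w : EuclideanSpace ℝ (Fin p) =>
              (1 / (m * q)) * ∑ i, ‖w - Z i‖ ^ q) z
            - gradient (fun w : EuclideanSpace ℝ (Fin p) =>
              (1 / (m * q)) * ∑ i, ‖w - Z i‖ ^ q) z',
            z - z'⟫ :=
  Dq_strongly_convex_on_convexHull_general q hq Z hdist c hc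
end

section
/- Let D = {m_1,…,m_n} be a finite design in a metric space X with per-point minimax distances d_i = sup_{x ∈ X_i} ‖x − m_i‖, where X_i = {x ∈ X : ‖x − m_i‖ ≤ ‖x − m_j‖ for all j}, and let d* = max_i d_i be the overall minimax distance. If m_1 is replaced by any point m̃_1 with ‖m̃_1 − m_1‖ ≤ d* − d_1, then the overall minimax distance of the new design D̃ = {m̃_1, m_2,…,m_n} is at most d*. -/
open Function

theorem dist_update_le_of_le {ι X : Type*} [PseudoMetricSpace X] [DecidableEq ι]
    {D : ι → X} {d : ι → ℝ} {r : ℝ} {x : X} {i : ι} (hx : dist x (D i) ≤ d i) (hd : d i ≤ r)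
    {i₀ : ι} {w : X} (hw : dist w (D i₀) ≤ r - d i₀) :
    dist x (update D i₀ w i) ≤ r := by
  rcases eq_or_ne i i₀ with rfl | hne
  · rw [update_self]
    calc dist x w ≤ dist x (D i) + dist w (D i) := dist_triangle_right _ _ _
      _ ≤ r := by linarith
  · rw [update_of_ne hne]
    exact hx.trans hd

theorem minimax_invariant_update_general {n : ℕ}
    (X : Type*) [MetricSpace X] (D : Fin n → X)
    (d : Fin n → ℝ) (dstar : ℝ)
    (hcover : ∀ x : X, ∃ i, ∀ j, dist x (D i) ≤ dist x (D j))
    (hd : ∀ i, ∀ x : X, (∀ j, dist x (D i) ≤ dist x (D j)) → dist x (D i) ≤ d i)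
    (hdstar : ∀ i, d i ≤ dstar)
    (i₀ : Fin n) (w : X) (hw : dist w (D i₀) ≤ dstar - d i₀) :
    ∀ x : X, ∃ i, dist x (Function.update D i₀ w i) ≤ dstar := by
  intro x
  obtain ⟨i, hi⟩ := hcover x
  exact ⟨i, dist_update_le_of_le (hd i x hi) (hdstar i) hw⟩

/-- If each point of a metric space X has a nearest design point
(Voronoi cells cover X), d i bounds the distance within the Voronoi cell of
design point i, d* bounds all the d i (d* = max_i d_i), and a design point
D i₀ is replaced by a point w with dist w (D i₀) ≤ d* - d i₀, then every
x ∈ X is within distance d* of the new design. -/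
theorem minimax_invariant_update {n : ℕ} (hn : 0 < n)
    (X : Type*) [MetricSpace X] (D : Fin n → X)
    (d : Fin n → ℝ) (dstar : ℝ)
    (hcover : ∀ x : X, ∃ i, ∀ j, dist x (D i) ≤ dist x (D j))
    (hd : ∀ i, ∀ x : X, (∀ j, dist x (D i) ≤ dist x (D j)) → dist x (D i) ≤ d i)
    (hdstar : ∀ i, d i ≤ dstar)
    (i₀ : Fin n) (w : X) (hw : dist w (D i₀) ≤ dstar - d i₀) :
    ∀ x : X, ∃ i, dist x (Function.update D i₀ w i) ≤ dstar :=
  minimax_invariant_update_general X D d dstar hcover hd hdstar i₀ w hw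
end
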